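/- Let 1 ≤ l ≤ n, L = 2(n−l), and let f̄ : ℝ^{l+L} → ℝⁿ be continuous. Define f : ℝⁿ → ℝⁿ by f(x) = f̄(x₁,…,x_l, sin x_{l+1}, cos x_{l+1},…, sin x_n, cos x_n), and let b̄_{ij}, b_{ij}, C, the extended system on ℝ^{l+L}, and Ĉ be as follows: b_{ij}(x) = b̄_{ij}(x₁,…,x_l, sin x_{l+1}, cos x_{l+1},…, sin x_n, cos x_n) with b̄_{ij} continuous, C = ⋃_{i=1}^{s} ⋂_{j=1}^{r_i} {x : b_{ij}(x) ≥ 0}, the extended system is dx̂_i/dt = f̄_i(x̂,ŵ) for i ≤ l, dŵ_{2k−1}/dt = ŵ_{2k} f̄_{l+k}(x̂,ŵ), dŵ_{2k}/dt = −ŵ_{2k−1} f̄_{l+k}(x̂,ŵ), and Ĉ = (⋃_{i=1}^{s} ⋂_{j=1}^{r_i} {(x̂,ŵ) : b̄_{ij}(x̂,ŵ) ≥ 0}) ∩ ⋂_{k=1}^{n−l} {(x̂,ŵ) : ŵ_{2k−1}² + ŵ_{2k}² = 1}. If Ĉ is positive invariant for the extended system, then C is positive invariant for ẋ = f(x); indeed,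 every solution x(·) of ẋ = f(x) lifts to a solution (x̂(·), ŵ(·)) of the extended system with x̂_i = x_i (i ≤ l), ŵ_{2k−1} = sin x_{l+k}, ŵ_{2k} = cos x_{l+k}. -/

import Mathlib

/-- `D` is positive invariant for `ẋ = F(x)`: every solution defined on `[0, t]`
that starts in `D` stays in `D`. -/
def PosInvariant {E : Type*} [NormedAddCommGroup E] [NormedSpace ℝ E]
    (F : E → E) (D : Set E) : Prop :=
  ∀ (x : ℝ → E) (t : ℝ), 0 ≤ t →
    (∀ s ∈ Set.Icc 0 t, HasDerivAt x (F (x s)) s) → x 0 ∈ D → x t ∈ D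

/-- The lift `x ↦ (x₁,…,x_l, sin x_{l+1}, …, cos x_n)` of the state, with the
angular coordinates grouped as `(sines, cosines)`. -/
noncomputable def trigLift {l d : ℕ} (x : (Fin l → ℝ) × (Fin d → ℝ)) :
    (Fin l → ℝ) × (Fin d → ℝ) × (Fin d → ℝ) :=
  (x.1, fun k => Real.sin (x.2 k), fun k => Real.cos (x.2 k))

/-- The extended vector field on `ℝ^{l+L}`. -/
def extField {l d : ℕ}
    (fbar : (Fin l → ℝ) × (Fin d → ℝ) × (Fin d → ℝ) → (Fin l → ℝ) × (Fin d → ℝ)) :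
    (Fin l → ℝ) × (Fin d → ℝ) × (Fin d → ℝ) →
      (Fin l → ℝ) × (Fin d → ℝ) × (Fin d → ℝ) :=
  fun z => ((fbar z).1,
    fun k => z.2.2 k * (fbar z).2 k,
    fun k => -(z.2.1 k * (fbar z).2 k))

/-! By the chain rule for `sin` and `cos`, `trigLift` carries solutions of `ẋ = f̄(trigLift x)`
to solutions of the extended system, and `Ĉ` pulls back to `C` along it because
`sin² + cos² = 1`; so invariance of `Ĉ` pulls back to invariance of `C`. -/

theorem PosInvariant.preimage {E E' : Type*} [NormedAddCommGroup E] [NormedSpace ℝ E]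
    [NormedAddCommGroup E'] [NormedSpace ℝ E'] {F : E → E} {G : E' → E'} {D : Set E'}
    (hD : PosInvariant G D) (g : E → E')
    (hg : ∀ (x : ℝ → E) (s : ℝ), HasDerivAt x (F (x s)) s →
      HasDerivAt (fun τ => g (x τ)) (G (g (x s))) s) :
    PosInvariant F (g ⁻¹' D) :=
  fun x t ht hx hx0 => hD (fun τ => g (x τ)) t ht (fun s hs => hg x s (hx s hs)) hx0

theorem HasDerivAt.trigLift {l d : ℕ} {x : ℝ → (Fin l → ℝ) × (Fin d → ℝ)}
    {v : (Fin l → ℝ) × (Fin d → ℝ)} {s : ℝ} (hx : HasDerivAt x v s) :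
    HasDerivAt (fun τ => trigLift (x τ))
      (v.1, fun k => Real.cos ((x s).2 k) * v.2 k,
        fun k => -(Real.sin ((x s).2 k) * v.2 k)) s := by
  have hangle : ∀ k, HasDerivAt (fun τ => (x τ).2 k) (v.2 k) s :=
    hasDerivAt_pi.mp hx.snd
  refine HasDerivAt.prodMk hx.fst
    (HasDerivAt.prodMk (hasDerivAt_pi.mpr fun k => ?_) (hasDerivAt_pi.mpr fun k => ?_))
  · simpa only [mul_comm] using (hangle k).sin
  · simpa only [mul_neg, mul_comm] using (hangle k).cos

theorem hasDerivAt_trigLift_extField {l d : ℕ}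
    {fbar : (Fin l → ℝ) × (Fin d → ℝ) × (Fin d → ℝ) → (Fin l → ℝ) × (Fin d → ℝ)}
    {x : ℝ → (Fin l → ℝ) × (Fin d → ℝ)} {s : ℝ}
    (hx : HasDerivAt x (fbar (trigLift (x s))) s) :
    HasDerivAt (fun τ => trigLift (x τ)) (extField fbar (trigLift (x s))) s :=
  hx.trigLift

theorem trig_invariance_of_extended_general {l d s : ℕ} (r : Fin s → ℕ)
    (fbar : (Fin l → ℝ) × (Fin d → ℝ) × (Fin d → ℝ) → (Fin l → ℝ) × (Fin d → ℝ))
    (bbar : (i : Fin s) → Fin (r i) → ((Fin l → ℝ) × (Fin d → ℝ) × (Fin d → ℝ)) → ℝ)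
    (Cset : Set ((Fin l → ℝ) × (Fin d → ℝ)))
    (hC : Cset = ⋃ i : Fin s, ⋂ j : Fin (r i), {x | 0 ≤ bbar i j (trigLift x)})
    (Chat : Set ((Fin l → ℝ) × (Fin d → ℝ) × (Fin d → ℝ)))
    (hChat : Chat =
      (⋃ i : Fin s, ⋂ j : Fin (r i), {z | 0 ≤ bbar i j z}) ∩
        (⋂ k : Fin d, {z | z.2.1 k ^ 2 + z.2.2 k ^ 2 = 1}))
    (hinv : PosInvariant (extField fbar) Chat) :
    PosInvariant (fun x => fbar (trigLift x)) Cset ∧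
      ∀ (x : ℝ → (Fin l → ℝ) × (Fin d → ℝ)) (t : ℝ), 0 ≤ t →
        (∀ s' ∈ Set.Icc 0 t, HasDerivAt x (fbar (trigLift (x s'))) s') →
        ∀ s' ∈ Set.Icc 0 t,
          HasDerivAt (fun τ => trigLift (x τ)) (extField fbar (trigLift (x s'))) s' := by
  have hCset : Cset = trigLift ⁻¹' Chat := by
    ext x
    simp [hC, hChat, trigLift, Real.sin_sq_add_cos_sq]
  exact ⟨hCset ▸ hinv.preimage trigLift fun _ _ => hasDerivAt_trigLift_extField,
    fun _ _ _ hx s' hs' => hasDerivAt_trigLift_extField (hx s' hs')⟩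

/-- for continuous `f̄`, if `Ĉ` is positive invariant for the extended
system then `C` is positive invariant for `ẋ = f(x)`; moreover every solution of
`ẋ = f(x)` lifts to a solution of the extended system. -/
theorem trig_invariance_of_extended {l d s : ℕ} (hl : 1 ≤ l) (r : Fin s → ℕ)
    (fbar : (Fin l → ℝ) × (Fin d → ℝ) × (Fin d → ℝ) → (Fin l → ℝ) × (Fin d → ℝ))
    (hf : Continuous fbar)
    (bbar : (i : Fin s) → Fin (r i) → ((Fin l → ℝ) × (Fin d → ℝ) × (Fin d → ℝ)) → ℝ)
    (hb : ∀ i j, Continuous (bbar i j))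
    (Cset : Set ((Fin l → ℝ) × (Fin d → ℝ)))
    (hC : Cset = ⋃ i : Fin s, ⋂ j : Fin (r i), {x | 0 ≤ bbar i j (trigLift x)})
    (Chat : Set ((Fin l → ℝ) × (Fin d → ℝ) × (Fin d → ℝ)))
    (hChat : Chat =
      (⋃ i : Fin s, ⋂ j : Fin (r i), {z | 0 ≤ bbar i j z}) ∩
        (⋂ k : Fin d, {z | z.2.1 k ^ 2 + z.2.2 k ^ 2 = 1}))
    (hinv : PosInvariant (extField fbar) Chat) :
    PosInvariant (fun x => fbar (trigLift x)) Cset ∧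
      ∀ (x : ℝ → (Fin l → ℝ) × (Fin d → ℝ)) (t : ℝ), 0 ≤ t →
        (∀ s' ∈ Set.Icc 0 t, HasDerivAt x (fbar (trigLift (x s'))) s') →
        ∀ s' ∈ Set.Icc 0 t,
          HasDerivAt (fun τ => trigLift (x τ)) (extField fbar (trigLift (x s'))) s' :=
  trig_invariance_of_extended_general r fbar bbar Cset hC Chat hChat hinv
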